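/- arXiv:2306.07360 — 2 statements merged into one kernel-verified Lean document; each statement's English description precedes it below -/
import Mathlib

section
/- Let L be a complete modular lattice and 𝔪 a submonoid with zero of End_lin(L) that is closed under complements. Then L is 𝔪-endoregular if and only if L is both 𝔪-Rickart and dual-𝔪-Rickart. -/
section Preamble

variable {α β : Type*}

/-- A linear morphism between complete lattices: there is a kernel element `k` such that
`φ x = φ (x ⊔ k)` for all `x`, and `φ` restricts to an isomorphism of (complete) lattices
from the interval `[k, ⊤]` onto `[⊥, φ ⊤]`. -/
def IsLinMor [CompleteLattice α] [CompleteLattice β] (φ : α → β) : Prop :=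
  ∃ k : α, (∀ x, φ x = φ (x ⊔ k)) ∧
    ∃ e : Set.Icc k (⊤ : α) ≃o Set.Icc (⊥ : β) (φ ⊤),
      ∀ x : Set.Icc k (⊤ : α), (e x : β) = φ (x : α)

/-- The kernel of a linear morphism: the largest element sent to `⊥`. -/
noncomputable def linKer [CompleteLattice α] [CompleteLattice β] (φ : α → β) : α :=
  sSup {a | φ a = ⊥}

/-- A submonoid with zero of the monoid of linear endomorphisms of `α`. -/
structure IsLinSubmonoid [CompleteLattice α] (M : Set (α → α)) : Prop where
  lin_mem : ∀ φ ∈ M, IsLinMor φ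
  id_mem : (id : α → α) ∈ M
  zero_mem : (fun _ : α => (⊥ : α)) ∈ M
  comp_mem : ∀ φ ∈ M, ∀ ψ ∈ M, φ ∘ ψ ∈ M

/-- The projection onto `x` along a complement `x'`. -/
def proj [CompleteLattice α] (x x' : α) : α → α := fun a => (a ⊔ x') ⊓ x

/-- `M` is closed under complements: whenever `φ ∈ M` restricts to a linear isomorphism
`[⊥, x] → [⊥, y]` with `x, y` complemented, the composite `ι_x ∘ (φ|_x)⁻¹ ∘ π_y` is in `M`. -/
def ClosedUnderComplements [CompleteLattice α] (M : Set (α → α)) : Prop :=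
  ∀ φ ∈ M, ∀ x x' y y' : α, IsCompl x x' → IsCompl y y' →
    ∀ e : Set.Icc (⊥ : α) x ≃o Set.Icc (⊥ : α) y,
      (∀ a : Set.Icc (⊥ : α) x, ((e a : Set.Icc (⊥ : α) y) : α) = φ (a : α)) →
      (fun a : α =>
        ((e.symm ⟨(a ⊔ y') ⊓ y, bot_le, inf_le_right⟩ : Set.Icc (⊥ : α) x) : α)) ∈ M

/-- `L` is `M`-endoregular: `M` is a regular monoid. -/
def MEndoregular [CompleteLattice α] (M : Set (α → α)) : Prop :=
  ∀ φ ∈ M, ∃ ψ ∈ M, φ ∘ ψ ∘ φ = φ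

/-- `L` is `M`-Rickart: kernels of members of `M` have complements. -/
def MRickart [CompleteLattice α] (M : Set (α → α)) : Prop :=
  ∀ φ ∈ M, ∃ y, IsCompl (linKer φ) y

/-- `L` is dual-`M`-Rickart: images of members of `M` have complements. -/
def MDualRickart [CompleteLattice α] (M : Set (α → α)) : Prop :=
  ∀ φ ∈ M, ∃ y, IsCompl (φ ⊤) y

/-- The `M`-C2 condition. -/
def MC2 [CompleteLattice α] (M : Set (α → α)) : Prop :=
  ∀ a x x' : α, IsCompl x x' →
    ∀ e : Set.Icc (⊥ : α) x ≃o Set.Icc (⊥ : α) a,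
      ((fun b : α =>
          ((e ⟨(b ⊔ x') ⊓ x, bot_le, inf_le_right⟩ : Set.Icc (⊥ : α) a) : α)) ∈ M) →
      ∃ a', IsCompl a a'

/-- The `M`-D2 condition. -/
def MD2 [CompleteLattice α] (M : Set (α → α)) : Prop :=
  ∀ a x : α, (∃ x', IsCompl x x') →
    ∀ e : Set.Icc a (⊤ : α) ≃o Set.Icc (⊥ : α) x,
      ((fun b : α => ((e ⟨a ⊔ b, le_sup_left, le_top⟩ : Set.Icc (⊥ : α) x) : α)) ∈ M) →
      ∃ a', IsCompl a a'

/-- `L` is `M`-abelian: every idempotent of `M` is central in `M`. -/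
def MAbelian [CompleteLattice α] (M : Set (α → α)) : Prop :=
  ∀ ε ∈ M, ε ∘ ε = ε → ∀ φ ∈ M, ε ∘ φ = φ ∘ ε

/-- `a` is `M`-`L`-generated: it is a join of images of linear morphisms `L → [⊥, a]`
whose composites with the inclusion `ι_a` lie in `M`. -/
def MGenerated [CompleteLattice α] (M : Set (α → α)) (a : α) : Prop :=
  ∃ S : Set (α → α), S ⊆ M ∧ (∀ f ∈ S, ∀ x, f x ≤ a) ∧ (⨆ f ∈ S, f ⊤) = a

/-- A complete lattice is compact if every join representation of `⊤` has a finite subjoin. -/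
def CompactLat (α : Type*) [CompleteLattice α] : Prop :=
  ∀ s : Set α, sSup s = ⊤ → ∃ t : Finset α, ↑t ⊆ s ∧ sSup (↑t : Set α) = ⊤

/-- An element `c` is compact if the interval `[⊥, c]` is a compact lattice. -/
def CompactElt [CompleteLattice α] (c : α) : Prop :=
  ∀ s : Set α, (∀ a ∈ s, a ≤ c) → sSup s = c →
    ∃ t : Finset α, ↑t ⊆ s ∧ sSup (↑t : Set α) = c

/-- `x` is essential in `L`. -/
def Essential [CompleteLattice α] (x : α) : Prop := ∀ y, x ⊓ y = ⊥ → y = ⊥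

/-- `x` is essential in the interval `[⊥, c]`. -/
def EssentialIn [CompleteLattice α] (x c : α) : Prop :=
  x ≤ c ∧ ∀ y ≤ c, x ⊓ y = ⊥ → y = ⊥

/-- `x` is superfluous in `L`. -/
def Superfluous [CompleteLattice α] (x : α) : Prop := ∀ y, x ⊔ y = ⊤ → y = ⊤

/-- `x` is superfluous in the interval `[⊥, c]`. -/
def SuperfluousIn [CompleteLattice α] (x c : α) : Prop :=
  x ≤ c ∧ ∀ y ≤ c, x ⊔ y = c → y = c

/-- `M` contains all the projections. -/
def ContainsProjections [CompleteLattice α] (M : Set (α → α)) : Prop :=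
  ∀ x x' : α, IsCompl x x' → proj x x' ∈ M

/-- `L` is `M`-K-extending. -/
def MKExtending [CompleteLattice α] (M : Set (α → α)) : Prop :=
  ∀ φ ∈ M, ∃ c : α, (∃ c', IsCompl c c') ∧ EssentialIn (linKer φ) c

/-- `L` is `M`-K-nonsingular. -/
def MKNonsingular [CompleteLattice α] (M : Set (α → α)) : Prop :=
  ∀ φ ∈ M, Essential (linKer φ) → φ = fun _ => (⊥ : α)

/-- `L` is `M`-T-lifting. -/
def MTLifting [CompleteLattice α] (M : Set (α → α)) : Prop :=
  ∀ φ ∈ M, ∃ c c' : α, IsCompl c c' ∧ c ≤ φ ⊤ ∧ SuperfluousIn (φ ⊤ ⊓ c') c'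

end Preamble

/-!
If `φ ∘ ψ ∘ φ = φ`, then `ψ ∘ φ` and `φ ∘ ψ` are idempotent members of `M`, the first with the
kernel of `φ` and the second with the image of `φ`; an idempotent linear endomorphism `ε`
splits the lattice, `IsCompl (linKer ε) (ε ⊤)`. Conversely, if `c` complements `linKer φ` and
`d` complements `φ ⊤`, then `φ` maps `[⊥, c]` isomorphically onto `[⊥, φ ⊤]` (modularity), and
`ι_c ∘ (φ|_c)⁻¹ ∘ π_{φ ⊤}` is an inner inverse of `φ`, which lies in `M` by closure under
complements.
-/

open Set

namespace IsLinMor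

variable {α β : Type*} [CompleteLattice α] [CompleteLattice β] {φ : α → β}

/-- The kernel element in the definition of a linear morphism is necessarily `linKer φ`. -/
theorem spec_linKer (h : IsLinMor φ) :
    φ (linKer φ) = ⊥ ∧ (∀ x, φ x = φ (x ⊔ linKer φ)) ∧
      ∃ e : Icc (linKer φ) (⊤ : α) ≃o Icc (⊥ : β) (φ ⊤), ∀ x, (e x : β) = φ x := by
  obtain ⟨k, hk, e, he⟩ := h
  have hk_bot : φ k = ⊥ := by
    have hle : e ⟨k, le_rfl, le_top⟩ ≤ e (e.symm ⟨⊥, le_rfl, bot_le⟩) :=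
      e.monotone (e.symm _).2.1
    rw [e.apply_symm_apply, ← Subtype.coe_le_coe, he] at hle
    exact le_bot_iff.mp hle
  have hker : linKer φ = k := by
    refine le_antisymm (sSup_le fun a ha => ?_) (le_sSup hk_bot)
    have hφ : e ⟨a ⊔ k, le_sup_right, le_top⟩ = e ⟨k, le_rfl, le_top⟩ :=
      Subtype.ext (by rw [he, he, ← hk, ha, hk_bot])
    exact sup_eq_right.mp (congrArg Subtype.val (e.injective hφ))
  exact hker ▸ ⟨hk_bot, hk, e, he⟩

theorem map_linKer (h : IsLinMor φ) : φ (linKer φ) = ⊥ :=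
  h.spec_linKer.1

theorem map_sup_linKer (h : IsLinMor φ) (x : α) : φ x = φ (x ⊔ linKer φ) :=
  h.spec_linKer.2.1 x

theorem exists_orderIso (h : IsLinMor φ) :
    ∃ e : Icc (linKer φ) (⊤ : α) ≃o Icc (⊥ : β) (φ ⊤), ∀ x, (e x : β) = φ x :=
  h.spec_linKer.2.2

theorem map_bot (h : IsLinMor φ) : φ ⊥ = ⊥ := by
  rw [h.map_sup_linKer, bot_sup_eq, h.map_linKer]

theorem monotone (h : IsLinMor φ) : Monotone φ := by
  obtain ⟨e, he⟩ := h.exists_orderIso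
  intro x y hxy
  rw [h.map_sup_linKer x, h.map_sup_linKer y, ← he ⟨x ⊔ _, le_sup_right, le_top⟩,
    ← he ⟨y ⊔ _, le_sup_right, le_top⟩]
  exact e.monotone (sup_le_sup_right hxy _)

theorem injOn (h : IsLinMor φ) : InjOn φ (Ici (linKer φ)) := by
  obtain ⟨e, he⟩ := h.exists_orderIso
  intro x hx y hy hxy
  have : e ⟨x, hx, le_top⟩ = e ⟨y, hy, le_top⟩ := Subtype.ext (by rw [he, he, hxy])
  exact congrArg Subtype.val (e.injective this)

theorem exists_map_eq (h : IsLinMor φ) {b : β} (hb : b ≤ φ ⊤) : ∃ a, φ a = b := by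
  obtain ⟨e, he⟩ := h.exists_orderIso
  exact ⟨e.symm ⟨b, bot_le, hb⟩, by rw [← he, e.apply_symm_apply]⟩

/-- Via the diamond isomorphism `[⊥, c] ≃o [linKer φ, ⊤]`, `a ↦ a ⊔ linKer φ`. -/
theorem exists_orderIso_of_isCompl [IsModularLattice α] (h : IsLinMor φ) {c : α}
    (hc : IsCompl (linKer φ) c) :
    ∃ e : Icc (⊥ : α) c ≃o Icc (⊥ : β) (φ ⊤), ∀ a, (e a : β) = φ a := by
  obtain ⟨e, he⟩ := h.exists_orderIso
  let diamond : Icc (⊥ : α) c ≃o Icc (linKer φ) ⊤ :=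
    ((OrderIso.setCongr _ _ (by rw [hc.symm.inf_eq_bot])).trans
      (infIccOrderIsoIccSup c (linKer φ))).trans
      (OrderIso.setCongr _ _ (by rw [hc.symm.sup_eq_top]))
  exact ⟨diamond.trans e, fun a => (he (diamond a)).trans (h.map_sup_linKer a).symm⟩

end IsLinMor

section Regular

variable {α β : Type*}

theorem linKer_comp_of_comp_comp_eq [CompleteLattice α] [CompleteLattice β]
    {φ : α → β} {ψ : β → α} (hφ : φ ⊥ = ⊥) (hψ : ψ ⊥ = ⊥) (h : φ ∘ ψ ∘ φ = φ) :
    linKer (ψ ∘ φ) = linKer φ := by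
  refine congrArg sSup (Set.ext fun a => ⟨fun ha => ?_, fun ha => ?_⟩)
  · change φ a = ⊥
    rw [← congrFun h a]
    change φ (ψ (φ a)) = ⊥
    rw [show ψ (φ a) = ⊥ from ha, hφ]
  · change ψ (φ a) = ⊥
    rw [show φ a = ⊥ from ha, hψ]

theorem apply_top_of_comp_comp_eq [Preorder α] [OrderTop α] [PartialOrder β] [OrderTop β]
    {φ : α → β} {ψ : β → α} (hφ : Monotone φ) (hψ : Monotone ψ) (h : φ ∘ ψ ∘ φ = φ) :
    φ (ψ ⊤) = φ ⊤ :=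
  le_antisymm (hφ le_top) <| calc
    φ ⊤ = φ (ψ (φ ⊤)) := (congrFun h ⊤).symm
    _ ≤ φ (ψ ⊤) := hφ (hψ le_top)

end Regular

section Endoregular

variable {α : Type*} [CompleteLattice α]

theorem IsLinMor.isCompl_linKer_apply_top {φ : α → α} (h : IsLinMor φ) (hφ : φ ∘ φ = φ) :
    IsCompl (linKer φ) (φ ⊤) := by
  have hfix : ∀ b ≤ φ ⊤, φ b = b := fun b hb => by
    obtain ⟨a, rfl⟩ := h.exists_map_eq hb
    exact congrFun hφ a
  constructor
  · rw [disjoint_iff, ← hfix _ inf_le_right, h.map_sup_linKer, sup_eq_right.mpr inf_le_left,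
      h.map_linKer]
  · rw [codisjoint_iff]
    refine h.injOn le_sup_left (le_top : linKer φ ≤ ⊤) ?_
    rw [sup_comm, ← h.map_sup_linKer, hfix _ le_rfl]

theorem MEndoregular.mRickart {M : Set (α → α)} (hM : IsLinSubmonoid M)
    (h : MEndoregular M) : MRickart M := by
  intro φ hφ
  obtain ⟨ψ, hψ, hreg⟩ := h φ hφ
  refine ⟨(ψ ∘ φ) ⊤, ?_⟩
  rw [← linKer_comp_of_comp_comp_eq (hM.lin_mem φ hφ).map_bot (hM.lin_mem ψ hψ).map_bot hreg]
  exact (hM.lin_mem _ (hM.comp_mem ψ hψ φ hφ)).isCompl_linKer_apply_top (congrArg (ψ ∘ ·) hreg)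

theorem MEndoregular.mDualRickart {M : Set (α → α)} (hM : IsLinSubmonoid M)
    (h : MEndoregular M) : MDualRickart M := by
  intro φ hφ
  obtain ⟨ψ, hψ, hreg⟩ := h φ hφ
  refine ⟨linKer (φ ∘ ψ), ?_⟩
  have hφψ := (hM.lin_mem _ (hM.comp_mem φ hφ ψ hψ)).isCompl_linKer_apply_top
    (congrArg (· ∘ ψ) hreg)
  rw [Function.comp_apply, apply_top_of_comp_comp_eq (hM.lin_mem φ hφ).monotone
    (hM.lin_mem ψ hψ).monotone hreg] at hφψ
  exact hφψ.symm

theorem mEndoregular_of_mRickart_of_mDualRickart [IsModularLattice α] {M : Set (α → α)}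
    (hM : IsLinSubmonoid M) (hcc : ClosedUnderComplements M) (hR : MRickart M)
    (hD : MDualRickart M) : MEndoregular M := by
  intro φ hφ
  have hlin := hM.lin_mem φ hφ
  obtain ⟨c, hc⟩ := hR φ hφ
  obtain ⟨d, hd⟩ := hD φ hφ
  obtain ⟨e, he⟩ := hlin.exists_orderIso_of_isCompl hc
  refine ⟨_, hcc φ hφ c (linKer φ) (φ ⊤) d hc.symm hd e he, funext fun a => ?_⟩
  have hφa : φ a ≤ φ ⊤ := hlin.monotone le_top
  have hproj : (⟨(φ a ⊔ d) ⊓ φ ⊤, bot_le, inf_le_right⟩ : Icc ⊥ (φ ⊤)) = ⟨φ a, bot_le, hφa⟩ :=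
    Subtype.ext <| by
      change (φ a ⊔ d) ⊓ φ ⊤ = φ a
      rw [sup_inf_assoc_of_le d hφa, hd.symm.inf_eq_bot, sup_bot_eq]
  change φ (e.symm ⟨(φ a ⊔ d) ⊓ φ ⊤, bot_le, inf_le_right⟩ : α) = φ a
  rw [hproj, ← he, e.apply_symm_apply]

end Endoregular

/-- `L` is `M`-endoregular iff `L` is `M`-Rickart and dual-`M`-Rickart. -/
theorem stmt_4 {α : Type*} [CompleteLattice α] [IsModularLattice α]
    (M : Set (α → α)) (hM : IsLinSubmonoid M) (hcc : ClosedUnderComplements M) :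
    MEndoregular M ↔ MRickart M ∧ MDualRickart M :=
  ⟨fun h => ⟨h.mRickart hM, h.mDualRickart hM⟩,
    fun ⟨hR, hD⟩ => mEndoregular_of_mRickart_of_mDualRickart hM hcc hR hD⟩
end

section
/- Let L be a complete modular lattice and 𝔪 a submonoid with zero of End_lin(L) that is closed under complements. The following are equivalent: (a) L is 𝔪-abelian-endoregular; (b) L is 𝔪-endoregular and φ(a) ≤ a for every 𝔪-L-generated element a ∈ L and every φ ∈ 𝔪. -/
/-!
An idempotent `ε ∈ M` is the projection onto `ε ⊤` along a complement `k`, and such a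
projection commutes with `φ` as soon as `φ` leaves both `ε ⊤` and `k` invariant. Both are
`M`-generated (by `ε` and by the projection onto `k`, which lies in `M` by closure under
complements), which gives (b) ⇒ (a). Conversely, if `f ψ f = f` then `f ψ` is an idempotent
with image `f ⊤`, so in an abelian monoid `φ f = φ (f ψ) f = f (ψ φ f)` and
`φ (f ⊤) ≤ f ⊤`; a linear morphism preserves joins, hence every `M`-generated element is
invariant.
-/

section LinearMorphism

variable {α β : Type*} [CompleteLattice α] [CompleteLattice β] {φ : α → β}

lemma IsLinMor.exists_kernel (h : IsLinMor φ) :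
    ∃ k, (∀ x, φ x = φ (x ⊔ k)) ∧
      (∀ b c, k ≤ b → k ≤ c → (φ b ≤ φ c ↔ b ≤ c)) ∧
      ∀ y ≤ φ ⊤, ∃ b, k ≤ b ∧ φ b = y := by
  obtain ⟨k, hk, e, he⟩ := h
  refine ⟨k, hk, fun b c hb hc => ?_, fun y hy => ?_⟩
  · rw [← he ⟨b, hb, le_top⟩, ← he ⟨c, hc, le_top⟩, Subtype.coe_le_coe, e.le_iff_le]
    exact Iff.rfl
  · exact ⟨e.symm ⟨y, bot_le, hy⟩, (e.symm _).2.1, by rw [← he, e.apply_symm_apply]⟩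

lemma IsLinMor.monotone_s10 (h : IsLinMor φ) : Monotone φ := by
  obtain ⟨k, hk, hle, -⟩ := h.exists_kernel
  intro u v huv
  rw [hk u, hk v, hle _ _ le_sup_right le_sup_right]
  exact sup_le_sup_right huv k

lemma IsLinMor.map_sSup_le (h : IsLinMor φ) (s : Set α) : φ (sSup s) ≤ sSup (φ '' s) := by
  obtain ⟨k, hk, hle, hsurj⟩ := h.exists_kernel
  obtain ⟨w, hkw, hw⟩ := hsurj (sSup (φ '' s)) (sSup_le (by
    rintro _ ⟨x, -, rfl⟩
    exact h.monotone_s10 le_top))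
  have hsw : sSup s ≤ w := sSup_le fun x hx => by
    refine le_sup_left.trans ((hle _ _ le_sup_right hkw).mp ?_)
    rw [← hk, hw]
    exact le_sSup ⟨x, hx, rfl⟩
  exact hw ▸ h.monotone_s10 hsw

lemma IsLinMor.map_sup (h : IsLinMor φ) (u v : α) : φ (u ⊔ v) = φ u ⊔ φ v := by
  refine le_antisymm ?_ (sup_le (h.monotone_s10 le_sup_left) (h.monotone_s10 le_sup_right))
  simpa [sSup_pair, Set.image_pair] using h.map_sSup_le {u, v}

end LinearMorphism

section Modular

variable {α : Type*} [CompleteLattice α] [IsModularLattice α]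

lemma IsLinMor.exists_eq_proj_of_idempotent {ε : α → α} (h : IsLinMor ε)
    (hi : ε ∘ ε = ε) :
    ∃ x k, IsCompl x k ∧ ε = proj x k := by
  have hεε (a : α) : ε (ε a) = ε a := congrFun hi a
  obtain ⟨k, hk, hle, hsurj⟩ := h.exists_kernel
  have hεk : ε k = ⊥ := by
    obtain ⟨b, hkb, hb⟩ := hsurj ⊥ bot_le
    exact le_bot_iff.mp (hb ▸ h.monotone_s10 hkb)
  have hεsup (b : α) (hkb : k ≤ b) : ε b ⊔ k = b :=
    le_antisymm_iff.mpr ⟨(hle _ _ le_sup_right hkb).mp (by rw [← hk, hεε]),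
      (hle _ _ hkb le_sup_right).mp (by rw [← hk, hεε])⟩
  have hfix (a : α) (ha : a ≤ ε ⊤) : ε a = a := by
    obtain ⟨b, -, rfl⟩ := hsurj a ha
    exact hεε b
  have hdisj : ε ⊤ ⊓ k = ⊥ := by
    rw [← hfix _ inf_le_left, ← le_bot_iff, ← hεk]
    exact h.monotone_s10 inf_le_right
  refine ⟨ε ⊤, k, ⟨disjoint_iff.mpr hdisj, codisjoint_iff.mpr (hεsup ⊤ le_top)⟩,
    funext fun a => ?_⟩
  calc ε a = ε (a ⊔ k) ⊔ ε ⊤ ⊓ k := by rw [hdisj, sup_bot_eq, ← hk]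
    _ = (ε (a ⊔ k) ⊔ k) ⊓ ε ⊤ := by
      rw [inf_comm, sup_inf_assoc_of_le k (h.monotone_s10 le_top)]
    _ = proj (ε ⊤) k a := by rw [hεsup _ le_sup_right]; rfl

lemma proj_comp_eq_comp_proj {φ : α → α} (hφ : IsLinMor φ) {x k : α} (hc : IsCompl x k)
    (hx : φ x ≤ x) (hk : φ k ≤ k) : proj x k ∘ φ = φ ∘ proj x k := by
  funext a
  set b := a ⊔ k
  have hb : b ⊓ x ⊔ k = b := by
    rw [inf_sup_assoc_of_le x le_sup_right, hc.sup_eq_top, inf_top_eq]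
  have hφb : φ a ⊔ k = φ (b ⊓ x) ⊔ k := by
    calc φ a ⊔ k = φ b ⊔ k := by rw [hφ.map_sup, sup_assoc, sup_eq_right.mpr hk]
      _ = φ (b ⊓ x) ⊔ k := by rw [← hb, hφ.map_sup, sup_assoc, sup_eq_right.mpr hk, hb]
  have hφbx : φ (b ⊓ x) ≤ x := (hφ.monotone_s10 inf_le_right).trans hx
  change (φ a ⊔ k) ⊓ x = φ (b ⊓ x)
  rw [hφb, sup_inf_assoc_of_le k hφbx, hc.symm.inf_eq_bot, sup_bot_eq]

end Modular

section Monoid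

variable {α : Type*} [CompleteLattice α] {M : Set (α → α)}

lemma ClosedUnderComplements.proj_mem (hcc : ClosedUnderComplements M) (hid : id ∈ M)
    {x x' : α} (h : IsCompl x x') : proj x x' ∈ M :=
  hcc id hid x x' x x' h h (OrderIso.refl _) fun _ => rfl

lemma mGenerated_of_proj_mem {x x' : α} (hp : proj x x' ∈ M) : MGenerated M x := by
  refine ⟨{proj x x'}, Set.singleton_subset_iff.mpr hp, ?_, ?_⟩
  · rintro f rfl y
    exact inf_le_right
  · simp [proj]

lemma MAbelian.exists_comp_eq_comp (hM : IsLinSubmonoid M) (hAb : MAbelian M)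
    (hEnd : MEndoregular M) {f φ : α → α} (hf : f ∈ M) (hφ : φ ∈ M) :
    ∃ g ∈ M, φ ∘ f = f ∘ g := by
  obtain ⟨ψ, hψ, hreg⟩ := hEnd f hf
  have hidem : (f ∘ ψ) ∘ (f ∘ ψ) = f ∘ ψ := congrArg (· ∘ ψ) hreg
  have hcomm := hAb (f ∘ ψ) (hM.comp_mem f hf ψ hψ) hidem φ hφ
  refine ⟨ψ ∘ φ ∘ f, hM.comp_mem ψ hψ _ (hM.comp_mem φ hφ f hf), ?_⟩
  calc φ ∘ f = φ ∘ (f ∘ ψ) ∘ f := by rw [Function.comp_assoc, hreg]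
    _ = f ∘ ψ ∘ φ ∘ f := by rw [← Function.comp_assoc, ← hcomm]; rfl

lemma MAbelian.map_le_of_mGenerated (hM : IsLinSubmonoid M) (hAb : MAbelian M)
    (hEnd : MEndoregular M) {a : α} (ha : MGenerated M a) {φ : α → α} (hφ : φ ∈ M) :
    φ a ≤ a := by
  obtain ⟨S, hSM, hSa, hsup⟩ := ha
  have hgen (f : α → α) (hf : f ∈ S) : φ (f ⊤) ≤ a := by
    obtain ⟨g, -, hg⟩ := hAb.exists_comp_eq_comp hM hEnd (hSM hf) hφ
    exact (congrFun hg ⊤).trans_le (hSa f hf _)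
  calc φ a = φ (sSup ((· ⊤) '' S)) := by rw [sSup_image, hsup]
    _ ≤ sSup (φ '' ((· ⊤) '' S)) := (hM.lin_mem φ hφ).map_sSup_le _
    _ ≤ a := sSup_le <| by
      rintro _ ⟨_, ⟨f, hf, rfl⟩, rfl⟩
      exact hgen f hf

end Monoid

/-- `L` is `M`-abelian-endoregular iff `L` is `M`-endoregular and every
`M`-`L`-generated element is invariant under every member of `M`. -/
theorem stmt_10 {α : Type*} [CompleteLattice α] [IsModularLattice α]
    (M : Set (α → α)) (hM : IsLinSubmonoid M) (hcc : ClosedUnderComplements M) :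
    (MAbelian M ∧ MEndoregular M) ↔
      (MEndoregular M ∧ ∀ a : α, MGenerated M a → ∀ φ ∈ M, φ a ≤ a) := by
  constructor
  · rintro ⟨hAb, hEnd⟩
    exact ⟨hEnd, fun a ha φ hφ => hAb.map_le_of_mGenerated hM hEnd ha hφ⟩
  · rintro ⟨hEnd, hInv⟩
    refine ⟨fun ε hε hi φ hφ => ?_, hEnd⟩
    obtain ⟨x, k, hc, rfl⟩ := (hM.lin_mem ε hε).exists_eq_proj_of_idempotent hi
    have hk : proj k x ∈ M := hcc.proj_mem hM.id_mem hc.symm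
    exact proj_comp_eq_comp_proj (hM.lin_mem φ hφ) hc
      (hInv x (mGenerated_of_proj_mem hε) φ hφ) (hInv k (mGenerated_of_proj_mem hk) φ hφ)
end
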